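/- arXiv:1605.00511 — 3 statements merged into one kernel-verified Lean document; each statement's English description precedes it below -/
import Mathlib

section
/- Let $k^\circ$ be a valuation ring with maximal ideal $\mathfrak{m}$ and fix a nonzero $\varpi \in \mathfrak{m}$. Let $A$ be a $k^\circ$-algebra satisfying properties (a), (b), (c) as above. Then for every $f \in A \setminus \mathfrak{m}A$, the quotient ring $A/(f)$ is $\varpi$-torsion free (equivalently, flat over $k^\circ$). -/
/-!
Write `ϖ a = g f` and factor `g = c g'` with `g' ∉ 𝔪A`. In the valuation ring either
`ϖ ∣ c`, and then cancelling the regular element `ϖ` puts `a` in `(f)`, or `c ∣ ϖ`,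
say `ϖ = c d`. In the second case `c` is regular as a divisor of `ϖ`, so `d a = g' f`;
since `𝔪A` is prime and `g' f ∉ 𝔪A`, the element `d` is a unit and again `a ∈ (f)`.
-/

open IsLocalRing

section

variable {R A : Type*} [CommRing R] [CommRing A] [Algebra R A]

theorem Ideal.notMem_of_algebraMap_mul_eq_mul {I : Ideal R}
    (hP : (I.map (algebraMap R A)).IsPrime)
    {d : R} {a x y : A} (hx : x ∉ I.map (algebraMap R A)) (hy : y ∉ I.map (algebraMap R A))
    (h : algebraMap R A d * a = x * y) : d ∉ I := by
  intro hd
  have hxy : x * y ∈ I.map (algebraMap R A) :=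
    h ▸ Ideal.mul_mem_right _ _ (Ideal.mem_map_of_mem _ hd)
  exact (hP.mem_or_mem hxy).elim hx hy

theorem mem_span_singleton_of_algebraMap_mul_eq [IsLocalRing R] [PreValuationRing R]
    (hP : ((maximalIdeal R).map (algebraMap R A)).IsPrime) {ϖ c : R}
    (hϖ : IsLeftRegular (algebraMap R A ϖ)) {a f g : A}
    (hf : f ∉ (maximalIdeal R).map (algebraMap R A))
    (hg : g ∉ (maximalIdeal R).map (algebraMap R A))
    (h : algebraMap R A ϖ * a = algebraMap R A c * (g * f)) : a ∈ Ideal.span {f} := by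
  obtain ⟨d, rfl | rfl⟩ := PreValuationRing.cond ϖ c
  · have ha : a = algebraMap R A d * g * f := hϖ (show _ * a = _ * _ by rw [h, map_mul]; ring)
    exact ha ▸ Ideal.mul_mem_left _ _ (Ideal.mem_span_singleton_self f)
  · rw [mul_comm c d, map_mul] at hϖ
    have hda : algebraMap R A d * a = g * f :=
      hϖ.of_mul (show _ * (_ * a) = _ * _ by rw [← h, map_mul]; ring)
    obtain ⟨u, hu⟩ := (notMem_maximalIdeal.mp
      (Ideal.notMem_of_algebraMap_mul_eq_mul hP hg hf hda)).map (algebraMap R A)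
    have ha : a = ↑u⁻¹ * g * f := by rw [mul_assoc, ← hda, ← hu, Units.inv_mul_cancel_left]
    exact ha ▸ Ideal.mul_mem_left _ _ (Ideal.mem_span_singleton_self f)

end

theorem stmt1_general {R A : Type*} [CommRing R] [IsDomain R] [ValuationRing R]
    [CommRing A] [Algebra R A]
    (ϖ : R)
    (ha : Function.Injective fun a : A => algebraMap R A ϖ * a)
    (hb : IsDomain (A ⧸ (IsLocalRing.maximalIdeal R).map (algebraMap R A)))
    (hc : ∀ f : A, f ≠ 0 → ∃ (c : R) (f' : A), f = algebraMap R A c * f' ∧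
      f' ∉ (IsLocalRing.maximalIdeal R).map (algebraMap R A)) :
    ∀ f : A, f ∉ (IsLocalRing.maximalIdeal R).map (algebraMap R A) →
      ∀ a : A, algebraMap R A ϖ * a ∈ Ideal.span {f} → a ∈ Ideal.span {f} := by
  have hP := (Ideal.Quotient.isDomain_iff_prime _).mp hb
  intro f hf a hmem
  obtain ⟨g, hg⟩ := Ideal.mem_span_singleton'.mp hmem
  obtain rfl | hg0 := eq_or_ne g 0
  · have : a = 0 := ha (by simpa using hg.symm)
    exact this ▸ Ideal.zero_mem _
  obtain ⟨c, g', rfl, hg'⟩ := hc g hg0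
  exact mem_span_singleton_of_algebraMap_mul_eq hP ha hf hg' (by rw [← hg]; ring)

/-- Proposition A.1(ii) of the paper.
`R` is a valuation ring (the valuation ring `k°`), `𝔪` its maximal ideal,
`ϖ ∈ 𝔪` nonzero, and `A` an `R`-algebra satisfying properties (a), (b), (c).
Then for every `f ∈ A \ 𝔪A` the quotient `A/(f)` is `ϖ`-torsion free:
for all `a ∈ A`, if `ϖ a ∈ (f)` then `a ∈ (f)`. -/
theorem stmt1 {R A : Type*} [CommRing R] [IsDomain R] [ValuationRing R]
    [CommRing A] [Algebra R A]
    (ϖ : R) (hϖ0 : ϖ ≠ 0) (hϖm : ϖ ∈ IsLocalRing.maximalIdeal R)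
    (ha : Function.Injective fun a : A => algebraMap R A ϖ * a)
    (hb : IsDomain (A ⧸ (IsLocalRing.maximalIdeal R).map (algebraMap R A)))
    (hc : ∀ f : A, f ≠ 0 → ∃ (c : R) (f' : A), f = algebraMap R A c * f' ∧
      f' ∉ (IsLocalRing.maximalIdeal R).map (algebraMap R A)) :
    ∀ f : A, f ∉ (IsLocalRing.maximalIdeal R).map (algebraMap R A) →
      ∀ a : A, algebraMap R A ϖ * a ∈ Ideal.span {f} → a ∈ Ideal.span {f} :=
  stmt1_general ϖ ha hb hc
end

section
/- Let $k^\circ$ be a valuation ring with maximal ideal $\mathfrak{m}$, $\varpi \in \mathfrak{m}$ nonzero, and let $A$ be a $k^\circ$-algebra satisfying properties (a), (b), (c). Fix an integer $q > 1$ and sequences $(f_m)_{m \ge 1}$, $(g_m)_{m \ge 1}$ in $A$ with $f_{m+1}^q = f_m$, $g_{m+1}^q = g_m$, and $f_1 - g_1 \in A \setminus \mathfrak{m}A$. Then the quotient $A/(f_m - g_m \mid m \ge 1)$ is $\varpi$-torsion free. -/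
/-!
The ideals `(f m - g m)` increase with `m`, because `f m - g m = f (m+1) ^ q - g (m+1) ^ q` is a
multiple of `f (m+1) - g (m+1)`; so `ϖ y ∈ (f m - g m ∣ m)` means `ϖ y = t a` for a single
`t = f m - g m`, and `t ∉ 𝔪A` since it divides `f 0 - g 0`. Write `a = c a'` with
`a' ∉ 𝔪A`. In the valuation ring, `ϖ ∣ c` or `ϖ = c d`; if `d ∈ 𝔪`, cancelling `c` gives
`d y = t a' ∈ 𝔪A`, contradicting primality of `𝔪A`. Hence `ϖ ∣ c`, and cancelling `ϖ` gives
`y ∈ (t)`.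
-/

open IsLocalRing

section

variable {R A : Type*} [CommRing R] [IsDomain R] [ValuationRing R] [CommRing A] [Algebra R A]

theorem exists_eq_algebraMap_mul_of_algebraMap_mul_eq_mul {ϖ : R}
    (hϖ : IsLeftRegular (algebraMap R A ϖ))
    (hprime : ((maximalIdeal R).map (algebraMap R A)).IsPrime)
    (hc : ∀ h : A, h ≠ 0 → ∃ (c : R) (h' : A), h = algebraMap R A c * h' ∧
      h' ∉ (maximalIdeal R).map (algebraMap R A))
    {t a y : A} (ht : t ∉ (maximalIdeal R).map (algebraMap R A))
    (hy : algebraMap R A ϖ * y = t * a) : ∃ b, a = algebraMap R A ϖ * b := by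
  rcases eq_or_ne a 0 with rfl | ha0
  · exact ⟨0, by rw [mul_zero]⟩
  obtain ⟨c, a', rfl, ha'⟩ := hc a ha0
  rcases ValuationRing.dvd_total ϖ c with ⟨e, rfl⟩ | ⟨d, hd⟩
  · exact ⟨algebraMap R A e * a', by rw [map_mul, mul_assoc]⟩
  by_cases hdu : IsUnit d
  · obtain ⟨u, rfl⟩ := hdu
    refine ⟨algebraMap R A ↑u⁻¹ * a', ?_⟩
    rw [hd, ← mul_assoc, ← map_mul, mul_assoc, Units.mul_inv, mul_one]
  · exfalso
    have hcreg : IsLeftRegular (algebraMap R A c) :=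
      IsLeftRegular.of_mul (b := algebraMap R A c) (by rwa [← map_mul, mul_comm, ← hd])
    have hdy : algebraMap R A d * y = t * a' := hcreg <| by
      beta_reduce
      rw [← mul_assoc, ← map_mul, ← hd, hy]
      ring
    have hmem : t * a' ∈ (maximalIdeal R).map (algebraMap R A) :=
      hdy ▸ Ideal.mul_mem_right y _ (Ideal.mem_map_of_mem _ hdu)
    exact (hprime.mem_or_mem hmem).elim ht ha'

theorem mem_span_singleton_of_algebraMap_mul_mem {ϖ : R}
    (hϖ : IsLeftRegular (algebraMap R A ϖ))
    (hprime : ((maximalIdeal R).map (algebraMap R A)).IsPrime)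
    (hc : ∀ h : A, h ≠ 0 → ∃ (c : R) (h' : A), h = algebraMap R A c * h' ∧
      h' ∉ (maximalIdeal R).map (algebraMap R A))
    {t y : A} (ht : t ∉ (maximalIdeal R).map (algebraMap R A))
    (hy : algebraMap R A ϖ * y ∈ Ideal.span {t}) : y ∈ Ideal.span {t} := by
  obtain ⟨a, ha⟩ := Ideal.mem_span_singleton'.mp hy
  obtain ⟨b, rfl⟩ := exists_eq_algebraMap_mul_of_algebraMap_mul_eq_mul hϖ hprime hc ht
    (ha.symm.trans (mul_comm _ _))
  refine Ideal.mem_span_singleton.mpr ⟨b, hϖ ?_⟩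
  beta_reduce
  rw [← ha]
  ring

end

theorem Ideal.exists_mem_span_singleton_of_monotone {A : Type*} [CommSemiring A] {a : ℕ → A}
    (ha : Monotone fun m => Ideal.span {a m}) {z : A} (hz : z ∈ Ideal.span (Set.range a)) :
    ∃ m, z ∈ Ideal.span {a m} := by
  rwa [← Set.iUnion_singleton_eq_range, Ideal.span_iUnion,
    Submodule.mem_iSup_of_directed _ ha.directed_le] at hz

theorem monotone_span_sub_of_pow_succ_eq {A : Type*} [CommRing A] {q : ℕ} {f g : ℕ → A}
    (hf : ∀ m, f (m + 1) ^ q = f m) (hg : ∀ m, g (m + 1) ^ q = g m) :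
    Monotone fun m => Ideal.span {f m - g m} :=
  monotone_nat_of_le_succ fun m => Ideal.span_singleton_le_span_singleton.mpr <| by
    rw [← hf m, ← hg m]
    exact sub_dvd_pow_sub_pow _ _ q

theorem stmt2_general {R A : Type*} [CommRing R] [IsDomain R] [ValuationRing R]
    [CommRing A] [Algebra R A]
    (ϖ : R)
    (ha : Function.Injective fun a : A => algebraMap R A ϖ * a)
    (hb : IsDomain (A ⧸ (IsLocalRing.maximalIdeal R).map (algebraMap R A)))
    (hc : ∀ h : A, h ≠ 0 → ∃ (c : R) (h' : A), h = algebraMap R A c * h' ∧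
      h' ∉ (IsLocalRing.maximalIdeal R).map (algebraMap R A))
    (q : ℕ) (f g : ℕ → A)
    (hf : ∀ m, f (m + 1) ^ q = f m) (hg : ∀ m, g (m + 1) ^ q = g m)
    (h1 : f 0 - g 0 ∉ (IsLocalRing.maximalIdeal R).map (algebraMap R A)) :
    ∀ x : A ⧸ Ideal.span (Set.range fun m => f m - g m),
      algebraMap R (A ⧸ Ideal.span (Set.range fun m => f m - g m)) ϖ * x = 0 → x = 0 := by
  intro x hx
  obtain ⟨y, rfl⟩ := Ideal.Quotient.mk_surjective x
  rw [← Ideal.Quotient.mk_algebraMap, ← map_mul, Ideal.Quotient.eq_zero_iff_mem] at hx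
  rw [Ideal.Quotient.eq_zero_iff_mem]
  have hmono := monotone_span_sub_of_pow_succ_eq hf hg
  obtain ⟨m, hm⟩ := Ideal.exists_mem_span_singleton_of_monotone hmono hx
  have hm_not_mem : f m - g m ∉ (maximalIdeal R).map (algebraMap R A) := fun h =>
    h1 <| Ideal.span_singleton_le_iff_mem _ |>.mp <|
      (hmono m.zero_le).trans ((Ideal.span_singleton_le_iff_mem _).mpr h)
  have hprime := (Ideal.Quotient.isDomain_iff_prime _).mp hb
  exact (Ideal.span_singleton_le_iff_mem _).mpr (Ideal.subset_span (Set.mem_range_self m))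
    (mem_span_singleton_of_algebraMap_mul_mem ha hprime hc hm_not_mem hm)

/-- Corollary A.2 of the paper.
`R` is a valuation ring with maximal ideal `𝔪`, `ϖ ∈ 𝔪` nonzero, and `A` an
`R`-algebra satisfying properties (a), (b), (c).  Given `q > 1` and sequences
`(f m)`, `(g m)` (indexed by `m ≥ 1`, here by `ℕ` with `f (m+1) ^ q = f m`,
`g (m+1) ^ q = g m`) with `f 0 - g 0 ∉ 𝔪A` (the case `m = 1` of the paper),
the quotient `A/(f m - g m ∣ m)` is `ϖ`-torsion free. -/
theorem stmt2 {R A : Type*} [CommRing R] [IsDomain R] [ValuationRing R]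
    [CommRing A] [Algebra R A]
    (ϖ : R) (hϖ0 : ϖ ≠ 0) (hϖm : ϖ ∈ IsLocalRing.maximalIdeal R)
    (ha : Function.Injective fun a : A => algebraMap R A ϖ * a)
    (hb : IsDomain (A ⧸ (IsLocalRing.maximalIdeal R).map (algebraMap R A)))
    (hc : ∀ h : A, h ≠ 0 → ∃ (c : R) (h' : A), h = algebraMap R A c * h' ∧
      h' ∉ (IsLocalRing.maximalIdeal R).map (algebraMap R A))
    (q : ℕ) (hq : 1 < q) (f g : ℕ → A)
    (hf : ∀ m, f (m + 1) ^ q = f m) (hg : ∀ m, g (m + 1) ^ q = g m)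
    (h1 : f 0 - g 0 ∉ (IsLocalRing.maximalIdeal R).map (algebraMap R A)) :
    ∀ x : A ⧸ Ideal.span (Set.range fun m => f m - g m),
      algebraMap R (A ⧸ Ideal.span (Set.range fun m => f m - g m)) ϖ * x = 0 → x = 0 :=
  stmt2_general ϖ ha hb hc q f g hf hg h1
end

section
/- Let $k^\circ$ be the valuation ring of a complete algebraically closed non-archimedean field $k$ with residue characteristic $p \neq 2$. Fix $\varpi' \in \mathfrak{m}$ nonzero with square $\varpi = \varpi'^2$, and fix compatible $p$-power roots $\varpi'^{1/p^m}$. Let $A \subseteq k^\circ \times k^\circ$ be the subring $A = \{(x,y) \in k^\circ \times k^\circ \mid x - y \in \mathfrak{m}\}$. Then: (1) $A$ is not topologically finitely generated over $k^\circ$ (i.e., not a quotient of any $k^\circ\langle T_1,\ldots,T_n\rangle$); (2) $A/\mathfrak{m}A \cong \kappa$ (the residue field), via the map induced by $k^\circ \to A$, $x \mapsto (x,x)$; (3) the integral closure of $A$ in $A[1/\varpi] = k \times k$ is $k^\circ \times k^\circ$. -/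
/-!
Call `v (x - y)` the gap of a pair `(x, y) ∈ A`. (1) Finitely many elements of `A` have gaps at
most some `β < 1`; the pairs of integers with gap at most `β` form a subring containing the
diagonal, and if `a ≡ b` modulo `ϖ` then the gap of `a` is at most `max (gap b) (v ϖ)`. The
`p`-power roots of `ϖ'` have values tending to `1`, so some `(ϖ'^{1/p^j}, 0) ∈ A` has gap above
`max β (v ϖ)` and cannot be approximated modulo `ϖ`. (2) `(x, y) - (y, y) = (u, 0) (u, u)` with
`u² = x - y`. (3) The projections of an element integral over `A` are integral over `k°`, and
`(x, y)` is a root of `(T - (x, x)) (T - (y, y))`.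
-/

theorem pow_pow_eq_of_pow_eq {M : Type*} [Monoid M] {p : ℕ} {t : ℕ → M}
    (ht : ∀ j, t (j + 1) ^ p = t j) (j : ℕ) : t j ^ p ^ j = t 0 := by
  induction j with
  | zero => simp
  | succ j ih => rw [pow_succ', pow_mul, ht, ih]

namespace NNReal

variable {p : ℕ} {t : ℕ → ℝ≥0}

theorem lt_one_of_pow_eq (hp : p ≠ 0) (ht : ∀ j, t (j + 1) ^ p = t j) (h0 : t 0 < 1)
    (j : ℕ) : t j < 1 := by
  rw [← pow_lt_one_iff_of_nonneg zero_le (pow_ne_zero j hp), pow_pow_eq_of_pow_eq ht]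
  exact h0

theorem exists_lt_of_pow_eq (hp : 1 < p) (ht : ∀ j, t (j + 1) ^ p = t j) (h0 : 0 < t 0)
    {β : ℝ≥0} (hβ : β < 1) : ∃ j, β < t j := by
  obtain ⟨j, hj⟩ := exists_pow_lt_of_lt_one h0 hβ
  refine ⟨j, (pow_lt_pow_iff_left₀ zero_le zero_le (pow_ne_zero j (by omega : p ≠ 0))).mp ?_⟩
  calc β ^ p ^ j ≤ β ^ j := pow_le_pow_of_le_one zero_le hβ.le (Nat.lt_pow_self hp).le
    _ < t 0 := hj
    _ = t j ^ p ^ j := (pow_pow_eq_of_pow_eq ht j).symm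

end NNReal

open Polynomial in
theorem RingHom.isIntegralElem_prodMk {R S : Type*} [CommRing R] [CommRing S]
    {f : R →+* S × S} {a b : R} {x y : S} (ha : f a = (x, x)) (hb : f b = (y, y)) :
    f.IsIntegralElem (x, y) :=
  ⟨(X - C a) * (X - C b), (monic_X_sub_C a).mul (monic_X_sub_C b), by
    ext <;> simp [ha, hb]⟩

namespace Valuation

variable {K Γ₀ : Type*} [Field K] [LinearOrderedCommGroupWithZero Γ₀] (v : Valuation K Γ₀)

theorem map_le_one_of_isIntegralElem {R : Type*} [CommRing R] {f : R →+* K}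
    (hf : ∀ r, v (f r) ≤ 1) {x : K} (hx : f.IsIntegralElem x) : v x ≤ 1 :=
  (integer.integers v).mem_of_integral
    (RingHom.IsIntegralElem.of_comp (f := f.codRestrict v.integer hf) hx)

theorem map_add_sub_add_le_max (x₁ x₂ y₁ y₂ : K) :
    v (x₁ + y₁ - (x₂ + y₂)) ≤ max (v (x₁ - x₂)) (v (y₁ - y₂)) := by
  rw [add_sub_add_comm]
  exact v.map_add _ _

theorem map_mul_sub_mul_le_max {x₁ x₂ y₁ y₂ : K} (hx₁ : v x₁ ≤ 1) (hy₂ : v y₂ ≤ 1) :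
    v (x₁ * y₁ - x₂ * y₂) ≤ max (v (y₁ - y₂)) (v (x₁ - x₂)) := by
  rw [show x₁ * y₁ - x₂ * y₂ = x₁ * (y₁ - y₂) + (x₁ - x₂) * y₂ by ring]
  refine (v.map_add _ _).trans (max_le_max ?_ ?_) <;> rw [map_mul]
  · exact mul_le_of_le_one_left' hx₁
  · exact mul_le_of_le_one_right' hy₂

def pairSubring (S : LowerSet Γ₀) (hS : 0 ∈ S) : Subring (K × K) where
  carrier := {z | v z.1 ≤ 1 ∧ v z.2 ≤ 1 ∧ v (z.1 - z.2) ∈ S}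
  mul_mem' {a b} ha hb := by
    refine ⟨?_, ?_, S.lower (v.map_mul_sub_mul_le_max ha.1 hb.2.1) (max_rec' _ hb.2.2 ha.2.2)⟩ <;>
      simp only [Prod.fst_mul, Prod.snd_mul, map_mul]
    exacts [mul_le_one' ha.1 hb.1, mul_le_one' ha.2.1 hb.2.1]
  one_mem' := by simpa using hS
  add_mem' {a b} ha hb :=
    ⟨(v.map_add _ _).trans (max_le ha.1 hb.1), (v.map_add _ _).trans (max_le ha.2.1 hb.2.1),
      S.lower (v.map_add_sub_add_le_max _ _ _ _) (max_rec' _ ha.2.2 hb.2.2)⟩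
  zero_mem' := by simpa using hS
  neg_mem' {a} ha := by simpa [neg_add_eq_sub, v.map_sub_swap a.2] using ha

def residueCongrSubring : Subring (K × K) :=
  v.pairSubring (LowerSet.Iio 1) zero_lt_one

namespace residueCongrSubring

variable {v}

theorem diag_mem {x : K} (hx : v x ≤ 1) : (x, x) ∈ v.residueCongrSubring :=
  ⟨hx, hx, by simp⟩

theorem mk_zero_mem {x : K} (hx : v x < 1) : (x, 0) ∈ v.residueCongrSubring :=
  ⟨hx.le, by simp, by simpa using hx⟩

end residueCongrSubring

open residueCongrSubring

def extendedMaximalIdeal : Ideal v.residueCongrSubring :=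
  Ideal.span {a | ∃ c : K, v c < 1 ∧ (a : K × K) = (c, c)}

variable {v}

theorem map_fst_lt_one_of_mem_extendedMaximalIdeal {a : v.residueCongrSubring}
    (ha : a ∈ v.extendedMaximalIdeal) : v (a : K × K).1 < 1 := by
  induction ha using Submodule.span_induction with
  | mem a ha =>
    obtain ⟨c, hc, hac⟩ := ha
    simpa [hac] using hc
  | zero => simp
  | add a b _ _ ha hb => exact v.map_add_lt ha hb
  | smul c a _ ha =>
    simpa using (mul_le_of_le_one_left' c.2.1).trans_lt ha

theorem mk_zero_mem_extendedMaximalIdeal [IsAlgClosed K] {t : K} (ht : v t < 1) :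
    ⟨(t, 0), mk_zero_mem ht⟩ ∈ v.extendedMaximalIdeal := by
  obtain ⟨u, hu⟩ := IsAlgClosed.exists_pow_nat_eq t two_pos
  have hu1 : v u < 1 := by
    rwa [← pow_lt_one_iff_of_nonneg zero_le two_ne_zero, ← map_pow, hu]
  have : (⟨(t, 0), mk_zero_mem ht⟩ : v.residueCongrSubring) =
      ⟨(u, 0), mk_zero_mem hu1⟩ * ⟨(u, u), diag_mem hu1.le⟩ := by
    ext <;> simp [← hu, sq]
  rw [this]
  exact Ideal.mul_mem_left _ _ (Ideal.subset_span ⟨u, hu1, rfl⟩)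

theorem exists_sub_diag_mem_extendedMaximalIdeal [IsAlgClosed K] (a : v.residueCongrSubring) :
    ∃ x : K, v x ≤ 1 ∧ ∃ d : v.residueCongrSubring,
      (d : K × K) = (x, x) ∧ a - d ∈ v.extendedMaximalIdeal := by
  obtain ⟨⟨a₁, a₂⟩, h₁, h₂, h⟩ := a
  refine ⟨a₂, h₂, ⟨(a₂, a₂), diag_mem h₂⟩, rfl, ?_⟩
  convert mk_zero_mem_extendedMaximalIdeal h using 1
  ext <;> simp

theorem isIntegralElem_subtype_iff (z : K × K) :
    v.residueCongrSubring.subtype.IsIntegralElem z ↔ v z.1 ≤ 1 ∧ v z.2 ≤ 1 := by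
  refine ⟨fun hz => ⟨?_, ?_⟩, fun ⟨h₁, h₂⟩ => ?_⟩
  · exact v.map_le_one_of_isIntegralElem (fun a => a.2.1) (hz.map (RingHom.fst K K))
  · exact v.map_le_one_of_isIntegralElem (fun a => a.2.2.1) (hz.map (RingHom.snd K K))
  · exact RingHom.isIntegralElem_prodMk (a := ⟨_, diag_mem h₁⟩) (b := ⟨_, diag_mem h₂⟩) rfl rfl

theorem exists_lt_one_forall_mem_le (s : Finset v.residueCongrSubring) :
    ∃ β < 1, ∀ a ∈ s, v ((a : K × K).1 - (a : K × K).2) ≤ β :=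
  ⟨s.sup fun a => v ((a : K × K).1 - (a : K × K).2),
    (Finset.sup_lt_iff (bot_lt_of_lt zero_lt_one)).mpr fun a _ => a.2.2.2,
    Finset.sup_le_iff.mp le_rfl⟩

theorem closure_le_comap_pairSubring {s : Set v.residueCongrSubring} {β : Γ₀}
    (hs : ∀ a ∈ s, v ((a : K × K).1 - (a : K × K).2) ≤ β) :
    Subring.closure ({a : v.residueCongrSubring | ∃ c : K, v c ≤ 1 ∧ (a : K × K) = (c, c)} ∪ s) ≤
      (v.pairSubring (LowerSet.Iic β) zero_le).comap v.residueCongrSubring.subtype := by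
  rw [Subring.closure_le]
  rintro a (⟨c, -, hc⟩ | ha)
  · exact ⟨a.2.1, a.2.2.1, by simp [hc]⟩
  · exact ⟨a.2.1, a.2.2.1, hs a ha⟩

theorem map_sub_le_max_of_sub_mem_span {a b ϖ : v.residueCongrSubring} {w : K}
    (hϖ : (ϖ : K × K) = (w, w)) (h : a - b ∈ Ideal.span {ϖ}) :
    v ((a : K × K).1 - (a : K × K).2) ≤ max (v ((b : K × K).1 - (b : K × K).2)) (v w) := by
  obtain ⟨c, hc⟩ := Ideal.mem_span_singleton'.mp h
  have hgap : (b : K × K).1 - (b : K × K).2 + ((c : K × K).1 - (c : K × K).2) * w =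
      (a : K × K).1 - (a : K × K).2 := by
    have hc' := congrArg Subtype.val hc
    simp only [Subring.coe_mul, AddSubgroupClass.coe_sub, hϖ, Prod.ext_iff, Prod.fst_mul,
      Prod.snd_mul, Prod.fst_sub, Prod.snd_sub] at hc'
    linear_combination hc'.1 - hc'.2
  rw [← hgap]
  refine (v.map_add _ _).trans (max_le_max le_rfl ?_)
  rw [map_mul]
  exact mul_le_of_le_one_left' c.2.2.2.le

variable (v) in
def IsTopologicallyFG (ϖ : v.residueCongrSubring) : Prop :=
  ∃ s : Finset v.residueCongrSubring, ∀ a : v.residueCongrSubring, ∀ k : ℕ,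
    ∃ b ∈ Subring.closure
        ({x : v.residueCongrSubring | ∃ c : K, v c ≤ 1 ∧ (x : K × K) = (c, c)} ∪ ↑s),
      a - b ∈ Ideal.span {ϖ ^ k}

theorem not_isTopologicallyFG {w : K} (hw : v w < 1)
    (hdense : ∀ β < 1, ∃ x : K, β < v x ∧ v x < 1) {ϖ : v.residueCongrSubring}
    (hϖ : (ϖ : K × K) = (w, w)) : ¬ v.IsTopologicallyFG ϖ := by
  rintro ⟨s, hs⟩
  obtain ⟨β, hβ, hsβ⟩ := exists_lt_one_forall_mem_le s
  obtain ⟨x, hx, hx1⟩ := hdense _ (max_lt hβ hw)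
  obtain ⟨b, hb, hab⟩ := hs ⟨(x, 0), mk_zero_mem hx1⟩ 1
  have hbβ : v ((b : K × K).1 - (b : K × K).2) ≤ β := (closure_le_comap_pairSubring hsβ hb).2.2
  have hx' := map_sub_le_max_of_sub_mem_span hϖ (pow_one ϖ ▸ hab)
  rw [sub_zero] at hx'
  exact (hx.trans_le (hx'.trans (max_le_max_right _ hbβ))).false

end Valuation

open Valuation in
theorem stmt18_general {K : Type*} [Field K] [Valued K NNReal] [IsAlgClosed K]
    (p : ℕ) (hp : p.Prime)
    (ϖ' : K) (hϖ'0 : ϖ' ≠ 0) (hϖ'1 : Valued.v ϖ' < 1)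
    (r : ℕ → K) (hr0 : r 0 = ϖ') (hrp : ∀ j, r (j + 1) ^ p = r j) :
    ∀ A : Subring (K × K),
      (A : Set (K × K)) = {z | Valued.v z.1 ≤ 1 ∧ Valued.v z.2 ≤ 1 ∧
        Valued.v (z.1 - z.2) < 1} →
    ∀ ϖA : A, (ϖA : K × K) = ((ϖ' ^ 2 : K), (ϖ' ^ 2 : K)) →
    ∀ mA : Ideal A,
      mA = Ideal.span {a : A | ∃ c : K, Valued.v c < 1 ∧ (a : K × K) = (c, c)} →
      -- (1) A is not topologically finitely generated over k°
      (¬ ∃ s : Finset A, ∀ a : A, ∀ k : ℕ,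
        ∃ b ∈ Subring.closure
          ({x : A | ∃ c : K, Valued.v c ≤ 1 ∧ (x : K × K) = (c, c)} ∪ ↑s),
          a - b ∈ Ideal.span {ϖA ^ k}) ∧
      -- (2) A/𝔪A ≅ κ via the diagonal map k° → A
      ((∀ a : A, ∃ x : K, Valued.v x ≤ 1 ∧
          ∃ d : A, (d : K × K) = (x, x) ∧ a - d ∈ mA) ∧
        (∀ (x : K) (d : A), (d : K × K) = (x, x) → d ∈ mA → Valued.v x < 1)) ∧
      -- (3) the integral closure of A in K × K is k° × k°
      (∀ z : K × K,
        (∃ P : Polynomial A, P.Monic ∧ Polynomial.eval₂ A.subtype z P = 0) ↔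
          (Valued.v z.1 ≤ 1 ∧ Valued.v z.2 ≤ 1)) := by
  intro A hA ϖA hϖA mA hmA
  obtain rfl : A = (Valued.v : Valuation K NNReal).residueCongrSubring := SetLike.coe_injective hA
  subst hmA
  have hvr : ∀ j, Valued.v (r (j + 1)) ^ p = Valued.v (r j) := fun j => by rw [← map_pow, hrp]
  have hdense : ∀ β < 1, ∃ x : K, β < Valued.v x ∧ Valued.v x < 1 := fun β hβ => by
    obtain ⟨j, hj⟩ := NNReal.exists_lt_of_pow_eq (t := fun j => Valued.v (r j)) hp.one_lt hvr
      (by rwa [hr0, pos_iff_ne_zero, Valuation.ne_zero_iff]) hβ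
    exact ⟨r j, hj, NNReal.lt_one_of_pow_eq (t := fun j => Valued.v (r j)) hp.ne_zero hvr
      (hr0 ▸ hϖ'1) j⟩
  refine ⟨not_isTopologicallyFG (by simpa using pow_lt_one₀ zero_le hϖ'1 two_ne_zero) hdense hϖA,
    ⟨exists_sub_diag_mem_extendedMaximalIdeal, fun x d hd hdm => ?_⟩, isIntegralElem_subtype_iff⟩
  simpa [hd] using map_fst_lt_one_of_mem_extendedMaximalIdeal hdm

/-- Example 3.19(iii),(iv),(v) of the paper.
`K` is a complete algebraically closed non-archimedean field with rank-one
valuation `v`, valuation ring `k° = {x | v x ≤ 1}`, maximal ideal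
`𝔪 = {x | v x < 1}`, residue field `κ = k°/𝔪`, of residue characteristic
`p ≠ 2`; `ϖ' ∈ 𝔪` is nonzero with compatible `p`-power roots
`r j = ϖ'^{1/p^j}` and `ϖ = ϖ'²`.  Let
`A = {(x,y) ∈ k° × k° | x - y ∈ 𝔪} ⊆ K × K`.  Then:
(1) `A` is not topologically finitely generated over `k°`: no finite subset
    `s ⊆ A` together with the diagonal copy of `k°` generates a `ϖ`-adically
    dense subring of `A`;
(2) `A/𝔪A ≅ κ`: the diagonal map `k° → A` is surjective onto `A` modulo `𝔪A`
    and has kernel exactly `𝔪`;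
(3) the integral closure of `A` in `A[1/ϖ] = K × K` is `k° × k°`: an element
    `z ∈ K × K` is integral over `A` iff `z ∈ k° × k°`. -/
theorem stmt18 {K : Type*} [Field K] [Valued K NNReal] [IsAlgClosed K]
    [CompleteSpace K]
    (p : ℕ) (hp : p.Prime) (hp2 : p ≠ 2) (hpres : Valued.v (p : K) < 1)
    (ϖ' : K) (hϖ'0 : ϖ' ≠ 0) (hϖ'1 : Valued.v ϖ' < 1)
    (r : ℕ → K) (hr0 : r 0 = ϖ') (hrp : ∀ j, r (j + 1) ^ p = r j) :
    ∀ A : Subring (K × K),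
      (A : Set (K × K)) = {z | Valued.v z.1 ≤ 1 ∧ Valued.v z.2 ≤ 1 ∧
        Valued.v (z.1 - z.2) < 1} →
    ∀ ϖA : A, (ϖA : K × K) = ((ϖ' ^ 2 : K), (ϖ' ^ 2 : K)) →
    ∀ mA : Ideal A,
      mA = Ideal.span {a : A | ∃ c : K, Valued.v c < 1 ∧ (a : K × K) = (c, c)} →
      -- (1) A is not topologically finitely generated over k°
      (¬ ∃ s : Finset A, ∀ a : A, ∀ k : ℕ,
        ∃ b ∈ Subring.closure
          ({x : A | ∃ c : K, Valued.v c ≤ 1 ∧ (x : K × K) = (c, c)} ∪ ↑s),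
          a - b ∈ Ideal.span {ϖA ^ k}) ∧
      -- (2) A/𝔪A ≅ κ via the diagonal map k° → A
      ((∀ a : A, ∃ x : K, Valued.v x ≤ 1 ∧
          ∃ d : A, (d : K × K) = (x, x) ∧ a - d ∈ mA) ∧
        (∀ (x : K) (d : A), (d : K × K) = (x, x) → d ∈ mA → Valued.v x < 1)) ∧
      -- (3) the integral closure of A in K × K is k° × k°
      (∀ z : K × K,
        (∃ P : Polynomial A, P.Monic ∧ Polynomial.eval₂ A.subtype z P = 0) ↔
          (Valued.v z.1 ≤ 1 ∧ Valued.v z.2 ≤ 1)) :=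
  stmt18_general p hp ϖ' hϖ'0 hϖ'1 r hr0 hrp
end
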